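/- Let r ≥ s ≥ 3 with r ≤ ⌊(5s−1)/3⌋ − 1, and let A ⊆ [1, 6s − 5] with |A| ≥ 5s − 4. If Δ : A → {1,2} is any 2-coloring, then either (i) there exists a monochromatic r-element subset S ⊆ A with diam(S) ≥ 3s − 3, or (ii) there exist monochromatic sets S₁, S₂ ⊆ A with |S₁| = s, |S₂| = r, max(S₁) < min(S₂), and diam(S₁) ≤ diam(S₂). -/

import Mathlib

open Finset

/-- diameter of a finite set of naturals -/
def diam (S : Finset ℕ) : ℕ := (S.max.getD 0) - (S.min.getD 0)

/-- S is monochromatic under a coloring -/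
def Mono {α : Type*} (f : ℕ → α) (S : Finset ℕ) : Prop := ∀ a ∈ S, ∀ b ∈ S, f a = f b

/-- S is zero-sum mod m under an integer coloring -/
def ZeroSum (f : ℕ → ℤ) (m : ℕ) (S : Finset ℕ) : Prop := (m : ℤ) ∣ ∑ x ∈ S, f x

/-- every element of S colored ∞ (= none) -/
def InftyMono (f : ℕ → Option ℤ) (S : Finset ℕ) : Prop := ∀ x ∈ S, f x = none

/-- S consists of ℤ-colored elements and is zero-sum mod m -/
def ZeroSumOpt (f : ℕ → Option ℤ) (m : ℕ) (S : Finset ℕ) : Prop :=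
  (∀ x ∈ S, (f x).isSome) ∧ (m : ℤ) ∣ ∑ x ∈ S, (f x).getD 0

/-!
If some colour class has at least `r` elements and diameter at least `3s - 3`, then `r` of its
elements including its two extremes give (i). Otherwise every class has at most `3s - 3`
elements, so both classes have at least `2s - 1 ≥ r` elements and diameter at most `3s - 4`.
The class `C₀` of `min A` then cannot contain `max A`, which therefore lies in the other class
`C₁`. The elements of `A` below `min C₁` all lie in `C₀`, and there are at least
`|A| - diam C₁ - 1 ≥ 2s - 1` of them; their `s` largest form `S₁`, with
`diam S₁ ≤ diam A + s - |A| ≤ 2s - 2 ≤ |C₁| - 1 ≤ diam C₁`, and `S₂` is any `r` elements of `C₁`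
including its extremes.
-/

theorem Mono.subset {α : Type*} {f : ℕ → α} {S T : Finset ℕ} (hT : Mono f T) (hST : S ⊆ T) :
    Mono f S :=
  fun a ha b hb => hT a (hST ha) b (hST hb)

theorem exists_mono_partition_of_fin_two (f : ℕ → Fin 2) {A : Finset ℕ} {a : ℕ} (ha : a ∈ A) :
    ∃ C₀ C₁ : Finset ℕ, C₀ ∪ C₁ = A ∧ Disjoint C₀ C₁ ∧ Mono f C₀ ∧ Mono f C₁ ∧ a ∈ C₀ := by
  refine ⟨A.filter (f · = f a), A.filter (¬f · = f a), filter_union_filter_not_eq _ _,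
    disjoint_filter_filter_not _ _ _, ?_, ?_, mem_filter.mpr ⟨ha, rfl⟩⟩
  all_goals
    intro x hx y hy
    have := (mem_filter.mp hx).2
    have := (mem_filter.mp hy).2
    omega

theorem diam_eq_max'_sub_min' {S : Finset ℕ} (h : S.Nonempty) : diam S = S.max' h - S.min' h := by
  rw [diam, ← coe_max' h, ← coe_min' h]
  rfl

theorem diam_le_of_subset_Icc {S : Finset ℕ} {a b : ℕ} (h : S ⊆ Icc a b) : diam S ≤ b - a := by
  rcases S.eq_empty_or_nonempty with rfl | hS
  · exact Nat.zero_le _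
  rw [diam_eq_max'_sub_min' hS]
  have := mem_Icc.mp (h (S.max'_mem hS))
  have := mem_Icc.mp (h (S.min'_mem hS))
  omega

theorem card_le_diam_add_one (S : Finset ℕ) : #S ≤ diam S + 1 := by
  rcases S.eq_empty_or_nonempty with rfl | hS
  · simp
  have hS_Icc : S ⊆ Icc (S.min' hS) (S.max' hS) := fun x hx =>
    mem_Icc.mpr ⟨S.min'_le x hx, S.le_max' x hx⟩
  have := card_le_card hS_Icc
  rw [Nat.card_Icc] at this
  rw [diam_eq_max'_sub_min' hS]
  omega

theorem diam_eq_of_subset {S T : Finset ℕ} (hT : T.Nonempty) (hST : S ⊆ T)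
    (hmin : T.min' hT ∈ S) (hmax : T.max' hT ∈ S) : diam S = diam T := by
  have hS : S.Nonempty := ⟨_, hmin⟩
  rw [diam_eq_max'_sub_min' hS, diam_eq_max'_sub_min' hT,
    le_antisymm (max'_subset hS hST) (S.le_max' _ hmax),
    le_antisymm (S.min'_le _ hmin) (min'_subset hS hST)]

theorem exists_subset_card_eq_diam_eq (C : Finset ℕ) {k : ℕ} (hk : 2 ≤ k) (hkC : k ≤ #C) :
    ∃ S ⊆ C, #S = k ∧ diam S = diam C := by
  have hC : C.Nonempty := card_pos.mp (by omega)
  have hends : {C.min' hC, C.max' hC} ⊆ C := by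
    simp [insert_subset_iff, min'_mem, max'_mem]
  obtain ⟨S, hendsS, hSC, hSk⟩ :=
    exists_subsuperset_card_eq hends ((card_insert_le _ _).trans hk) hkC
  exact ⟨S, hSC, hSk, diam_eq_of_subset hC hSC (hendsS (mem_insert_self _ _))
    (hendsS (mem_insert_of_mem (mem_singleton_self _)))⟩

theorem diam_lt_diam_insert {a : ℕ} {S : Finset ℕ} (hS : S.Nonempty) (ha : ∀ x ∈ S, a < x) :
    diam S < diam (insert a S) := by
  have hins : (insert a S).Nonempty := insert_nonempty a S
  rw [diam_eq_max'_sub_min' hS, diam_eq_max'_sub_min' hins, max'_insert a S hS, min'_insert a S hS]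
  have := ha _ (S.min'_mem hS)
  have := S.min'_le_max' hS
  omega

theorem exists_subset_card_eq_diam_add_le (L : Finset ℕ) {k : ℕ} (hk : 0 < k) (hkL : k ≤ #L) :
    ∃ S ⊆ L, #S = k ∧ diam S + (#L - k) ≤ diam L := by
  induction L using Finset.induction_on_min generalizing k with
  | empty => simp at hkL; omega
  | insert a L ha ih =>
    have haL : a ∉ L := fun h => lt_irrefl a (ha a h)
    rw [card_insert_of_notMem haL] at hkL ⊢
    rcases hkL.eq_or_lt with rfl | hlt
    · exact ⟨insert a L, subset_rfl, card_insert_of_notMem haL, by simp⟩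
    obtain ⟨S, hSL, hSk, hSdiam⟩ := ih hk (by omega)
    have := diam_lt_diam_insert (card_pos.mp (by omega)) ha
    exact ⟨S, hSL.trans (subset_insert a L), hSk, by omega⟩

theorem exists_subset_lt_card_eq_diam_le {A C : Finset ℕ} (hC : C.Nonempty) (hCA : C ⊆ A)
    (hmax : ∀ x ∈ A, x ≤ C.max' hC) {k : ℕ} (hk : 0 < k) (hkA : k + diam C + 1 ≤ #A) :
    ∃ S ⊆ A, (∀ x ∈ S, ∀ y ∈ C, x < y) ∧ #S = k ∧ diam S + #A ≤ diam A + k := by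
  set L := A.filter (· < C.min' hC)
  have hsplit : #L + #(A.filter (¬ · < C.min' hC)) = #A := card_filter_add_card_filter_not _
  have hupper : A.filter (¬ · < C.min' hC) ⊆ Icc (C.min' hC) (C.max' hC) := fun x hx => by
    rw [mem_filter] at hx
    exact mem_Icc.mpr ⟨not_lt.mp hx.2, hmax x hx.1⟩
  have hupper_card := (card_le_card hupper).trans_eq (Nat.card_Icc _ _)
  have hL : L.Nonempty := card_pos.mp (by rw [diam_eq_max'_sub_min' hC] at hkA; omega)
  have hLA : L ⊆ A := filter_subset _ _
  have hA : A.Nonempty := hL.mono hLA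
  have hLC : ∀ x ∈ L, ∀ y ∈ C, x < y := fun x hx y hy =>
    (mem_filter.mp hx).2.trans_le (C.min'_le y hy)
  have hdiam : diam L + diam C + 1 ≤ diam A := by
    rw [diam_eq_max'_sub_min' hL, diam_eq_max'_sub_min' hC, diam_eq_max'_sub_min' hA]
    have : L.max' hL < C.min' hC := hLC _ (L.max'_mem hL) _ (C.min'_mem hC)
    have : A.min' hA ≤ L.min' hL := min'_subset hL hLA
    have : C.max' hC ≤ A.max' hA := A.le_max' _ (hCA (C.max'_mem hC))
    have := C.min'_le_max' hC
    have := L.min'_le_max' hL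
    omega
  obtain ⟨S, hSL, hSk, hSdiam⟩ := exists_subset_card_eq_diam_add_le L hk (by
    rw [diam_eq_max'_sub_min' hC] at hkA; omega)
  exact ⟨S, hSL.trans hLA, fun x hx => hLC x (hSL hx), hSk, by
    rw [diam_eq_max'_sub_min' hC] at hkA hdiam; omega⟩

theorem diam_lt_of_not_exists_mono {α : Type*} {f : ℕ → α} {A C : Finset ℕ} {r d : ℕ}
    (hwide : ¬∃ S : Finset ℕ, S ⊆ A ∧ Mono f S ∧ #S = r ∧ d ≤ diam S) (hr : 2 ≤ r)
    (hC : Mono f C) (hCA : C ⊆ A) (hrC : r ≤ #C) : diam C < d := by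
  obtain ⟨S, hSC, hSr, hSdiam⟩ := exists_subset_card_eq_diam_eq C hr hrC
  exact not_le.mp fun h => hwide ⟨S, hSC.trans hCA, hC.subset hSC, hSr, hSdiam ▸ h⟩

theorem card_le_of_not_exists_mono {α : Type*} {f : ℕ → α} {A C : Finset ℕ} {r d : ℕ}
    (hwide : ¬∃ S : Finset ℕ, S ⊆ A ∧ Mono f S ∧ #S = r ∧ d ≤ diam S) (hr : 2 ≤ r)
    (hrd : r ≤ d + 1) (hC : Mono f C) (hCA : C ⊆ A) : #C ≤ d := by
  by_contra! hdC
  have := diam_lt_of_not_exists_mono hwide hr hC hCA (by omega)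
  have := card_le_diam_add_one C
  omega

theorem stmt11 (s r : ℕ) (hs : 3 ≤ s) (hsr : s ≤ r) (hr : r ≤ (5 * s - 1) / 3 - 1)
    (A : Finset ℕ) (hA : A ⊆ Finset.Icc 1 (6 * s - 5)) (hAcard : 5 * s - 4 ≤ A.card)
    (Δ : ℕ → Fin 2) :
    (∃ S : Finset ℕ, S ⊆ A ∧ Mono Δ S ∧ S.card = r ∧ 3 * s - 3 ≤ diam S) ∨
    (∃ S₁ S₂ : Finset ℕ, S₁ ⊆ A ∧ S₂ ⊆ A ∧ Mono Δ S₁ ∧ Mono Δ S₂ ∧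
      S₁.card = s ∧ S₂.card = r ∧ (∀ a ∈ S₁, ∀ b ∈ S₂, a < b) ∧ diam S₁ ≤ diam S₂) := by
  refine or_iff_not_imp_left.mpr fun hwide => ?_
  have hr2 : 2 ≤ r := by omega
  have hAne : A.Nonempty := card_pos.mp (by omega)
  obtain ⟨C₀, C₁, rfl, hdisj, hC₀, hC₁, hmin⟩ :=
    exists_mono_partition_of_fin_two Δ (A.min'_mem hAne)
  have hsplit : #(C₀ ∪ C₁) = #C₀ + #C₁ := card_union_of_disjoint hdisj
  have hcard₀ := card_le_of_not_exists_mono hwide hr2 (by omega) hC₀ subset_union_left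
  have hcard₁ := card_le_of_not_exists_mono hwide hr2 (by omega) hC₁ subset_union_right
  have hdiam₁ := diam_lt_of_not_exists_mono hwide hr2 hC₁ subset_union_right (by omega)
  have hmax : (C₀ ∪ C₁).max' hAne ∈ C₁ := by
    refine (mem_union.mp ((C₀ ∪ C₁).max'_mem hAne)).resolve_left fun hmax => ?_
    have := diam_eq_of_subset hAne subset_union_left hmin hmax
    have := diam_lt_of_not_exists_mono hwide hr2 hC₀ subset_union_left (by omega)
    have := card_le_diam_add_one (C₀ ∪ C₁)
    omega
  obtain ⟨S₁, hS₁A, hS₁C₁, hS₁s, hS₁diam⟩ := exists_subset_lt_card_eq_diam_le ⟨_, hmax⟩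
    subset_union_right (fun x hx => ((C₀ ∪ C₁).le_max' x hx).trans (C₁.le_max' _ hmax))
    (k := s) (by omega) (by omega)
  have hS₁C₀ : S₁ ⊆ C₀ := fun x hx =>
    (mem_union.mp (hS₁A hx)).resolve_right fun hx₁ => lt_irrefl x (hS₁C₁ x hx x hx₁)
  obtain ⟨S₂, hS₂C₁, hS₂r, hS₂diam⟩ := exists_subset_card_eq_diam_eq C₁ hr2 (by omega)
  have := diam_le_of_subset_Icc hA
  have := card_le_diam_add_one C₁
  exact ⟨S₁, S₂, hS₁A, hS₂C₁.trans subset_union_right, hC₀.subset hS₁C₀, hC₁.subset hS₂C₁,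
    hS₁s, hS₂r, fun a ha b hb => hS₁C₁ a ha b (hS₂C₁ hb), by omega⟩
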